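/- Let w ∈ ℤ, m ∈ ℂ, and let φ : ℍ × ℂ → ℂ and E : ℍ → ℂ be functions such that for a fixed matrix [[a,b],[c,d]] ∈ SL(2,ℤ): (i) φ((aτ+b)/(cτ+d), z/(cτ+d)) = (cτ+d)^w · e^{2πim·cz²/(cτ+d)} · φ(τ,z) for all τ ∈ ℍ, z ∈ ℂ, and (ii) E((aτ+b)/(cτ+d)) = (cτ+d)²E(τ) + (6/(πi))·c(cτ+d). Then the function φ̃(τ,z) = e^{(m/3)π²E(τ)z²} · φ(τ,z) satisfies φ̃((aτ+b)/(cτ+d), z/(cτ+d)) = (cτ+d)^w · φ̃(τ,z), i.e. the index-m automorphy factor is cancelled by the quasimodular anomaly of E. -/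

import Mathlib

open Complex Real

lemma intCast_mul_add_ne_zero_of_det_eq_one {a b c d : ℤ} (hdet : a * d - b * c = 1) {τ : ℂ}
    (hτ : τ.im ≠ 0) : (c : ℂ) * τ + d ≠ 0 := by
  have hcd : ![(c : ℝ), d] ≠ 0 := by
    intro h
    have hc : (c : ℝ) = 0 := congrFun h 0
    have hd : (d : ℝ) = 0 := congrFun h 1
    norm_cast at hc hd
    simp [hc, hd] at hdet
  simpa using UpperHalfPlane.linear_ne_zero_of_im hτ hcd

/-- The anomaly contributes `(m/3)π² · (6/(πi)) c u · (z/u)² = -2πi m c z²/u` to the exponent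
(as `1/i = -i`), cancelling the index-`m` factor. -/
lemma exp_anomaly_mul_exp_index (m e z u c : ℂ) (hu : u ≠ 0) :
    cexp ((m / 3) * (π : ℂ) ^ 2 * (u ^ 2 * e + (6 / (π * I)) * c * u) * (z / u) ^ 2) *
        cexp (2 * π * I * m * c * z ^ 2 / u)
      = cexp ((m / 3) * (π : ℂ) ^ 2 * e * z ^ 2) := by
  have hπ : (π : ℂ) ≠ 0 := ofReal_ne_zero.mpr pi_ne_zero
  rw [← Complex.exp_add]
  congr 1
  field_simp
  linear_combination 6 * m * z ^ 2 * c * I_sq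

/-- If `φ` transforms as a Jacobi-like form of weight `w` and index `m` under a
fixed element of `SL(2,ℤ)`, and `E` has the quasimodular anomaly of `E₂`, then
`φ̃(τ,z) = e^{(m/3)π²E(τ)z²} φ(τ,z)` transforms with weight `w` and vanishing
index: the index-`m` automorphy factor is cancelled. -/
theorem stmt_18 (w : ℤ) (m : ℂ) (φ : ℂ → ℂ → ℂ) (E : ℂ → ℂ)
    (a b c d : ℤ) (hdet : a * d - b * c = 1)
    (hφ : ∀ τ : ℂ, 0 < τ.im → ∀ z : ℂ,
      φ (((a : ℂ) * τ + b) / ((c : ℂ) * τ + d)) (z / ((c : ℂ) * τ + d))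
        = ((c : ℂ) * τ + d) ^ w *
          Complex.exp (2 * π * I * m * (c : ℂ) * z ^ 2 / ((c : ℂ) * τ + d)) *
          φ τ z)
    (hE : ∀ τ : ℂ, 0 < τ.im →
      E (((a : ℂ) * τ + b) / ((c : ℂ) * τ + d))
        = ((c : ℂ) * τ + d) ^ 2 * E τ + (6 / (π * I)) * (c : ℂ) * ((c : ℂ) * τ + d)) :
    ∀ τ : ℂ, 0 < τ.im → ∀ z : ℂ,
      Complex.exp ((m / 3) * (π : ℂ) ^ 2 *
            E (((a : ℂ) * τ + b) / ((c : ℂ) * τ + d)) * (z / ((c : ℂ) * τ + d)) ^ 2) *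
          φ (((a : ℂ) * τ + b) / ((c : ℂ) * τ + d)) (z / ((c : ℂ) * τ + d))
        = ((c : ℂ) * τ + d) ^ w *
          (Complex.exp ((m / 3) * (π : ℂ) ^ 2 * E τ * z ^ 2) * φ τ z) := by
  intro τ hτ z
  have hu := intCast_mul_add_ne_zero_of_det_eq_one hdet hτ.ne'
  rw [hE τ hτ, hφ τ hτ z, ← exp_anomaly_mul_exp_index m (E τ) z _ c hu]
  ring
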